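/- Let n ≥ 3 be an odd integer and let W_n be the wheel graph on n+1 vertices. Then for every set F of edges of W_n such that W_n − F has no isolated vertices, γ_t(W_n − F) ≤ γ_t(W_n) + (n−1) = n+1; moreover b_t^{n−1}(W_n) = 2n − (n+1)/2. -/

import Mathlib

/-!
The wheel has `γ_t(W_n) = 2` (the hub together with any rim vertex), while every graph without
isolated vertices has `γ_t ≤ |V| = n + 1`; so the target `γ_t(W_n) + (n - 1)` is `|V|` itself.
A graph `H` without isolated vertices reaches `γ_t(H) = |V|` only if it is a perfect matching:
no `V \ {v}` is total dominating, so every `v` is the unique neighbour of some vertex `p v`,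
and `p` is injective, hence onto. Thus the admissible edge sets `F` are exactly the complements of
perfect matchings of `W_n`, all of size `2n - (n + 1) / 2`, and for odd `n` the wheel has one.
-/

open SimpleGraph

/-- A set `S` of vertices is a total dominating set of `G` if every vertex of `G`
is adjacent to at least one vertex of `S`. -/
def IsTotalDominatingSet {V : Type*} (G : SimpleGraph V) (S : Set V) : Prop :=
  ∀ v : V, ∃ u ∈ S, G.Adj v u

/-- The total domination number of `G`: the minimum cardinality of a total
dominating set of `G`. -/
noncomputable def totalDominationNumber {V : Type*} (G : SimpleGraph V) : ℕ :=
  sInf {n : ℕ | ∃ S : Set V, S.ncard = n ∧ IsTotalDominatingSet G S}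

/-- A graph has no isolated vertices if every vertex has a neighbor. -/
def NoIsolatedVerts {V : Type*} (G : SimpleGraph V) : Prop :=
  ∀ v : V, ∃ u : V, G.Adj v u

/-- The `k`-total bondage number of `G`: the minimum cardinality of a set `F` of
edges of `G` such that `G − F` has no isolated vertices and the total domination
number of `G − F` is at least `γ_t(G) + k`. -/
noncomputable def kTotalBondage {V : Type*} (G : SimpleGraph V) (k : ℕ) : ℕ :=
  sInf {m : ℕ | ∃ F : Set (Sym2 V), F ⊆ G.edgeSet ∧ F.ncard = m ∧
    NoIsolatedVerts (G.deleteEdges F) ∧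
    totalDominationNumber G + k ≤ totalDominationNumber (G.deleteEdges F)}

/-- The wheel graph `W_n` on `n + 1` vertices: a hub vertex (`none`) joined to
every vertex of a cycle `C_n` (the vertices `some i`). -/
def wheelGraph (n : ℕ) : SimpleGraph (Option (Fin n)) :=
  SimpleGraph.fromRel (fun v w =>
    v = none ∨ ∃ i j : Fin n, v = some i ∧ w = some j ∧ (cycleGraph n).Adj i j)

section TotalDomination

variable {V : Type*} {G : SimpleGraph V} {S : Set V}

lemma NoIsolatedVerts.isTotalDominatingSet_univ (hG : NoIsolatedVerts G) :
    IsTotalDominatingSet G Set.univ := fun v =>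
  let ⟨u, hu⟩ := hG v
  ⟨u, Set.mem_univ u, hu⟩

lemma totalDominationNumber_le_ncard (hS : IsTotalDominatingSet G S) :
    totalDominationNumber G ≤ S.ncard :=
  Nat.sInf_le ⟨S, rfl, hS⟩

lemma totalDominationNumber_le_card [Finite V] (hG : NoIsolatedVerts G) :
    totalDominationNumber G ≤ Nat.card V :=
  Set.ncard_univ V ▸ totalDominationNumber_le_ncard hG.isTotalDominatingSet_univ

lemma le_totalDominationNumber {k : ℕ} (hG : NoIsolatedVerts G)
    (hk : ∀ S, IsTotalDominatingSet G S → k ≤ S.ncard) : k ≤ totalDominationNumber G :=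
  le_csInf ⟨_, _, rfl, hG.isTotalDominatingSet_univ⟩ fun _ ⟨S, hS, hTDS⟩ => hS ▸ hk S hTDS

lemma IsTotalDominatingSet.two_le_ncard [Finite V] [Nonempty V]
    (hS : IsTotalDominatingSet G S) : 2 ≤ S.ncard := by
  obtain ⟨w, hwS, -⟩ := hS (Classical.arbitrary V)
  obtain ⟨u, huS, hwu⟩ := hS w
  calc 2 = ({w, u} : Set V).ncard := (Set.ncard_pair hwu.ne).symm
    _ ≤ S.ncard := Set.ncard_le_ncard (Set.insert_subset hwS (Set.singleton_subset_iff.2 huS))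

lemma IsTotalDominatingSet.mem_of_forall_adj_eq {u v : V} (hS : IsTotalDominatingSet G S)
    (hv : ∀ w, G.Adj v w → w = u) : u ∈ S := by
  obtain ⟨w, hwS, hvw⟩ := hS v
  exact hv w hvw ▸ hwS

lemma IsTotalDominatingSet.eq_univ (hS : IsTotalDominatingSet G S)
    (hG : ∀ v, ∃! w, G.Adj v w) : S = Set.univ := by
  refine Set.eq_univ_of_forall fun u => ?_
  obtain ⟨v, hvu, -⟩ := hG u
  obtain ⟨_, -, hv⟩ := hG v
  exact hS.mem_of_forall_adj_eq fun w hw => (hv w hw).trans (hv u hvu.symm).symm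

lemma totalDominationNumber_eq_card_of_existsUnique_adj [Finite V]
    (hG : ∀ v, ∃! w, G.Adj v w) : totalDominationNumber G = Nat.card V := by
  have hNI : NoIsolatedVerts G := fun v => (hG v).exists
  refine (totalDominationNumber_le_card hNI).antisymm
    (le_totalDominationNumber hNI fun S hS => ?_)
  rw [hS.eq_univ hG, Set.ncard_univ]

lemma existsUnique_adj_of_card_le_totalDominationNumber [Finite V] (hG : NoIsolatedVerts G)
    (h : Nat.card V ≤ totalDominationNumber G) : ∀ v, ∃! w, G.Adj v w := by
  have hpendant : ∀ v, ∃ p, ∀ u, G.Adj p u ↔ u = v := by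
    intro v
    have hnot : ¬ IsTotalDominatingSet G (Set.univ \ {v}) := by
      intro hS
      have := totalDominationNumber_le_ncard hS
      rw [Set.ncard_sdiff (Set.subset_univ _), Set.ncard_univ, Set.ncard_singleton] at this
      have : 0 < Nat.card V := Nat.card_pos_iff.2 ⟨⟨v⟩, inferInstance⟩
      omega
    obtain ⟨p, hp⟩ : ∃ p, ∀ u, G.Adj p u → u = v := by
      by_contra! hall
      refine hnot fun p => ?_
      obtain ⟨u, hpu, huv⟩ := hall p
      exact ⟨u, ⟨Set.mem_univ u, huv⟩, hpu⟩
    obtain ⟨u, hpu⟩ := hG p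
    exact ⟨p, fun w => ⟨hp w, fun hw => hw ▸ hp u hpu ▸ hpu⟩⟩
  choose p hp using hpendant
  have hinj : p.Injective := fun v₁ v₂ he =>
    (hp v₂ v₁).1 (he ▸ (hp v₁ v₁).2 rfl)
  intro x
  obtain ⟨v, rfl⟩ := (Finite.injective_iff_surjective.1 hinj) x
  exact ⟨v, (hp v v).2 rfl, fun w => (hp v w).1⟩

end TotalDomination

section Bondage

variable {V : Type*} [Finite V] {G : SimpleGraph V}

lemma two_mul_ncard_edgeSet_of_existsUnique_adj (hG : ∀ v, ∃! w, G.Adj v w) :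
    2 * G.edgeSet.ncard = Nat.card V := by
  classical
  have := Fintype.ofFinite V
  rw [← coe_edgeFinset, Set.ncard_coe_finset, ← sum_degrees_eq_twice_card_edges,
    Finset.sum_congr rfl fun v _ => degree_eq_one_iff_existsUnique_adj.2 (hG v)]
  simp

lemma ncard_eq_ncard_edgeSet_sub_ncard_edgeSet_deleteEdges {F : Set (Sym2 V)}
    (hF : F ⊆ G.edgeSet) :
    F.ncard = G.edgeSet.ncard - (G.deleteEdges F).edgeSet.ncard := by
  rw [edgeSet_deleteEdges, Set.ncard_sdiff hF]
  have := Set.ncard_le_ncard hF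
  omega

theorem kTotalBondage_eq_of_perfectMatching {k : ℕ}
    (hk : totalDominationNumber G + k = Nat.card V) {M : SimpleGraph V} (hMG : M ≤ G)
    (hM : ∀ v, ∃! w, M.Adj v w) :
    kTotalBondage G k = G.edgeSet.ncard - Nat.card V / 2 := by
  have hsize : ∀ F ⊆ G.edgeSet, (∀ v, ∃! w, (G.deleteEdges F).Adj v w) →
      F.ncard = G.edgeSet.ncard - Nat.card V / 2 := fun F hF hF1 => by
    have := two_mul_ncard_edgeSet_of_existsUnique_adj hF1
    rw [ncard_eq_ncard_edgeSet_sub_ncard_edgeSet_deleteEdges hF]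
    omega
  have hadm : G.edgeSet \ M.edgeSet ⊆ G.edgeSet := Set.sdiff_subset
  rw [kTotalBondage]
  refine (congrArg sInf (Set.eq_singleton_iff_unique_mem.2 ⟨?_, ?_⟩)).trans (csInf_singleton _)
  · rw [← deleteEdges_sdiff_eq_of_le hMG] at hM
    refine ⟨_, hadm, hsize _ hadm hM, fun v => (hM v).exists, ?_⟩
    rw [totalDominationNumber_eq_card_of_existsUnique_adj hM, hk]
  · rintro _ ⟨F, hF, rfl, hNI, hγ⟩
    exact hsize F hF (existsUnique_adj_of_card_le_totalDominationNumber hNI (hk ▸ hγ))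

end Bondage

section Wheel

variable {n : ℕ}

instance : DecidableRel (wheelGraph n).Adj := fun v w =>
  decidable_of_iff _ (fromRel_adj _ v w).symm

@[simp]
lemma wheelGraph_adj_none_left {w : Option (Fin n)} : (wheelGraph n).Adj none w ↔ w ≠ none := by
  simp [wheelGraph, fromRel_adj, eq_comm]

@[simp]
lemma wheelGraph_adj_none_right {v : Option (Fin n)} : (wheelGraph n).Adj v none ↔ v ≠ none := by
  rw [adj_comm, wheelGraph_adj_none_left]

@[simp]
lemma wheelGraph_adj_some_some {i j : Fin n} :
    (wheelGraph n).Adj (some i) (some j) ↔ (cycleGraph n).Adj i j := by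
  simp [wheelGraph, fromRel_adj, adj_comm (cycleGraph n) j, and_iff_right_of_imp Adj.ne]

lemma wheelGraph_degree_none : (wheelGraph n).degree none = n := by
  have : (wheelGraph n).neighborFinset none = Finset.univ.erase none := by
    ext w
    simp
  rw [degree, this, Finset.card_erase_of_mem (Finset.mem_univ _), Finset.card_univ]
  simp

lemma wheelGraph_degree_some (hn : 3 ≤ n) (i : Fin n) : (wheelGraph n).degree (some i) = 3 := by
  obtain ⟨m, rfl⟩ := Nat.exists_eq_add_of_le' hn
  have : (wheelGraph (m + 3)).neighborFinset (some i) =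
      insert none (((cycleGraph (m + 3)).neighborFinset i).map .some) := by
    ext (_ | j) <;> simp
  rw [degree, this, Finset.card_insert_of_notMem (by simp), Finset.card_map, ← degree,
    cycleGraph_degree_three_le]

lemma ncard_edgeSet_wheelGraph (hn : 3 ≤ n) : (wheelGraph n).edgeSet.ncard = 2 * n := by
  have := sum_degrees_eq_twice_card_edges (wheelGraph n)
  simp only [Fintype.sum_option, wheelGraph_degree_none, wheelGraph_degree_some hn,
    Finset.sum_const, Finset.card_univ, Fintype.card_fin, smul_eq_mul] at this
  rw [← coe_edgeFinset, Set.ncard_coe_finset]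
  omega

lemma totalDominationNumber_wheelGraph (hn : 1 ≤ n) :
    totalDominationNumber (wheelGraph n) = 2 := by
  have hS : IsTotalDominatingSet (wheelGraph n) {none, some ⟨0, hn⟩} := by
    rintro (_ | i)
    · exact ⟨some ⟨0, hn⟩, by simp, by simp⟩
    · exact ⟨none, by simp, by simp⟩
  refine le_antisymm ?_ (le_totalDominationNumber (fun v => hS v |>.imp fun _ h => h.2)
    fun _ hS => hS.two_le_ncard)
  exact (totalDominationNumber_le_ncard hS).trans_eq (Set.ncard_pair (by simp))

def wheelIndex : Option (Fin n) → ℕ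
  | none => 0
  | some i => i + 1

lemma wheelIndex_injective : Function.Injective (wheelIndex (n := n)) := by
  rintro (_ | i) (_ | j) h <;> simp_all [wheelIndex, Fin.val_inj]

lemma wheelIndex_le (v : Option (Fin n)) : wheelIndex v ≤ n := by
  cases v <;> simp [wheelIndex]

lemma exists_wheelIndex_eq {k : ℕ} (hk : k ≤ n) : ∃ v : Option (Fin n), wheelIndex v = k := by
  cases k with
  | zero => exact ⟨none, rfl⟩
  | succ k => exact ⟨some ⟨k, hk⟩, rfl⟩

variable (n) in
/-- Pairs the vertices of `wheelIndex` `2j` and `2j + 1`: the spoke `none – some 0` and the rim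
edges `some (2j - 1) – some (2j)`. -/
def wheelMatching : SimpleGraph (Option (Fin n)) where
  Adj v w := v ≠ w ∧ wheelIndex v / 2 = wheelIndex w / 2

lemma wheelMatching_le : wheelMatching n ≤ wheelGraph n := by
  rintro (_ | i) (_ | j) ⟨hne, hij⟩
  · exact absurd rfl hne
  · simp
  · simp
  · simp only [ne_eq, Option.some.injEq, wheelIndex] at hne hij
    rw [wheelGraph_adj_some_some, cycleGraph_adj']
    rcases Nat.lt_or_gt_of_ne (Fin.val_ne_of_ne hne) with h | h
    · right
      rw [Fin.coe_sub_iff_le.2 h.le]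
      omega
    · left
      rw [Fin.coe_sub_iff_le.2 h.le]
      omega

lemma wheelMatching_existsUnique_adj (hn : Odd n) (v : Option (Fin n)) :
    ∃! w, (wheelMatching n).Adj v w := by
  obtain ⟨t, rfl⟩ := hn
  have hv := wheelIndex_le v
  have hk :
      (if wheelIndex v % 2 = 0 then wheelIndex v + 1 else wheelIndex v - 1) ≤ 2 * t + 1 := by
    split_ifs <;> omega
  obtain ⟨w, hw⟩ := exists_wheelIndex_eq hk
  refine ⟨w, ⟨fun h => ?_, ?_⟩, fun u ⟨hvu, hu⟩ => wheelIndex_injective ?_⟩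
  · subst h
    split_ifs at hw <;> omega
  · split_ifs at hw <;> omega
  · have := wheelIndex_injective.ne hvu
    split_ifs at hw <;> omega

end Wheel

/-- For odd `n ≥ 3`, removing edges from the wheel `W_n` can increase the total
domination number by at most `n − 1` (i.e. up to `n + 1`), and
`b_t^{n−1}(W_n) = 2n − (n+1)/2`. -/
theorem kTotalBondage_wheelGraph_odd (n : ℕ) (hn : 3 ≤ n) (hpar : Odd n) :
    (∀ F : Set (Sym2 (Option (Fin n))), F ⊆ (wheelGraph n).edgeSet →
      NoIsolatedVerts ((wheelGraph n).deleteEdges F) →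
      totalDominationNumber ((wheelGraph n).deleteEdges F) ≤
        totalDominationNumber (wheelGraph n) + (n - 1)) ∧
    totalDominationNumber (wheelGraph n) + (n - 1) = n + 1 ∧
    kTotalBondage (wheelGraph n) (n - 1) = 2 * n - (n + 1) / 2 := by
  have hcard : Nat.card (Option (Fin n)) = n + 1 := by simp
  have htarget : totalDominationNumber (wheelGraph n) + (n - 1) = n + 1 := by
    rw [totalDominationNumber_wheelGraph (by omega)]
    omega
  refine ⟨fun F _ hF => htarget ▸ hcard ▸ totalDominationNumber_le_card hF, htarget, ?_⟩
  rw [kTotalBondage_eq_of_perfectMatching (htarget.trans hcard.symm) wheelMatching_le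
    (wheelMatching_existsUnique_adj hpar), ncard_edgeSet_wheelGraph hn, hcard]
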